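/- arXiv:2403.19777 — 6 statements merged into one kernel-verified Lean document; each statement's English description precedes it below -/
import Mathlib

section
/- The characteristic polynomial of the 6×6 matrix M of the externally coupled Pais–Uhlenbeck system equals χ(λ) = (ω₀²+λ²)(ω₁²+λ²)(ω₂²+λ²) + γλ², where γ = ĝ²(ω₂²−ω₁²)/m. -/
/-! Expand `det (M - λ)` along its third row, whose only nonzero entries are `-λ` and `1 / m`.
Deleting the third column as well removes the coupling, and the two oscillators give the minor
`-λ (λ² + ω₁²)(λ² + ω₂²)`. In the other minor the coupling contributes
`g² (ω₂² (λ² + ω₁²) - ω₁² (λ² + ω₂²)) = g² λ² (ω₂² - ω₁²)`, which is where `γ` comes from. -/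

section CommRing

variable {R : Type*} [CommRing R]

theorem det_decoupled_minor (ω1 ω2 g lam : R) :
    (!![-lam, 0, 1, 0, 0;
        0, -lam, 0, -1, 0;
        -ω1^2, 0, -lam, 0, 0;
        0, ω2^2, 0, -lam, 0;
        0, 0, g, g, -lam] : Matrix (Fin 5) (Fin 5) R).det
      = -lam * (lam^2 + ω1^2) * (lam^2 + ω2^2) := by
  simp [Matrix.det_succ_row_zero, Fin.sum_univ_succ, Fin.succAbove]
  ring

theorem det_coupling_minor (ω1 ω2 g c lam : R) :
    (!![-lam, 0, -g, 1, 0;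
        0, -lam, -g, 0, -1;
        -ω1^2, 0, 0, -lam, 0;
        0, ω2^2, 0, 0, -lam;
        0, 0, -c, g, g] : Matrix (Fin 5) (Fin 5) R).det
      = -c * (lam^2 + ω1^2) * (lam^2 + ω2^2) - g^2 * lam^2 * (ω2^2 - ω1^2) := by
  simp [Matrix.det_succ_row_zero, Fin.sum_univ_succ, Fin.succAbove]
  ring

end CommRing

section Field

variable {K : Type*} [Field K]

def coupledPUMatrix (ω0 ω1 ω2 g m : K) : Matrix (Fin 6) (Fin 6) K :=
  !![0, 0, -g, 1, 0, 0;
     0, 0, -g, 0, -1, 0;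
     0, 0, 0, 0, 0, 1/m;
     -ω1^2, 0, 0, 0, 0, 0;
     0, ω2^2, 0, 0, 0, 0;
     0, 0, -m*ω0^2, g, g, 0]

variable (ω0 ω1 ω2 g m lam : K)

theorem coupledPUMatrix_sub_smul_one_submatrix_two_two :
    (coupledPUMatrix ω0 ω1 ω2 g m - lam • 1).submatrix (Fin.succAbove 2) (Fin.succAbove 2) =
      !![-lam, 0, 1, 0, 0;
        0, -lam, 0, -1, 0;
        -ω1^2, 0, -lam, 0, 0;
        0, ω2^2, 0, -lam, 0;
        0, 0, g, g, -lam] := by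
  ext i j
  fin_cases i <;> fin_cases j <;> simp [coupledPUMatrix, Fin.succAbove]

theorem coupledPUMatrix_sub_smul_one_submatrix_two_five :
    (coupledPUMatrix ω0 ω1 ω2 g m - lam • 1).submatrix (Fin.succAbove 2) (Fin.succAbove 5) =
      !![-lam, 0, -g, 1, 0;
        0, -lam, -g, 0, -1;
        -ω1^2, 0, 0, -lam, 0;
        0, ω2^2, 0, 0, -lam;
        0, 0, -(m * ω0^2), g, g] := by
  ext i j
  fin_cases i <;> fin_cases j <;> simp [coupledPUMatrix, Fin.succAbove]

theorem det_coupledPUMatrix_sub_smul_one :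
    (coupledPUMatrix ω0 ω1 ω2 g m - lam • 1).det =
      lam^2 * (lam^2 + ω1^2) * (lam^2 + ω2^2)
        + m⁻¹ * (m * ω0^2 * (lam^2 + ω1^2) * (lam^2 + ω2^2) + g^2 * lam^2 * (ω2^2 - ω1^2)) := by
  rw [Matrix.det_succ_row _ 2, Fin.sum_univ_six, coupledPUMatrix_sub_smul_one_submatrix_two_two,
    coupledPUMatrix_sub_smul_one_submatrix_two_five, det_decoupled_minor, det_coupling_minor]
  simp [coupledPUMatrix]
  ring

end Field

/-- The characteristic determinant of the 6×6 matrix of the externally coupled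
Pais–Uhlenbeck system equals
`(ω₀²+λ²)(ω₁²+λ²)(ω₂²+λ²) + γλ²` with `γ = ĝ²(ω₂²−ω₁²)/m`. -/
theorem coupled_PU_characteristic_determinant (ω0 ω1 ω2 g m : ℝ) (hm : m ≠ 0) :
    ∀ lam : ℝ,
      Matrix.det
        ((!![0, 0, -g, 1, 0, 0;
             0, 0, -g, 0, -1, 0;
             0, 0, 0, 0, 0, 1/m;
             -ω1^2, 0, 0, 0, 0, 0;
             0, ω2^2, 0, 0, 0, 0;
             0, 0, -m*ω0^2, g, g, 0] : Matrix (Fin 6) (Fin 6) ℝ)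
          - lam • (1 : Matrix (Fin 6) (Fin 6) ℝ))
      = (ω0^2 + lam^2) * (ω1^2 + lam^2) * (ω2^2 + lam^2)
        + (g^2 * (ω2^2 - ω1^2) / m) * lam^2 := by
  intro lam
  rw [← coupledPUMatrix, det_coupledPUMatrix_sub_smul_one]
  field_simp
  ring
end

section
/- Let w, v, c be reals with c ≠ 0 satisfying (w+v)² > 4c², wv < c², and w > v. Set r = t = 1 and s = −2c/(w+v). Then the 2×2 symmetric matrices S = [[1, s],[s, 1]] and U = A·S·B are both positive definite, where A = [[w, c],[c, v]] and B = [[1, 0],[0, −1]]. -/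
/-!
With `s = -2c/(w+v)` the off-diagonal entries of `U = A S B` are `c + v s` and `-(c + w s)`, which
agree exactly when `(w + v) s + 2c = 0`; so `U` is symmetric. A symmetric `2 × 2` real matrix is
positive definite iff its trace and determinant are positive. Here `tr S = 2`, `det S = 1 - s²`,
`tr U = w - v` and `det U = det A · det S · det B = (c² - w v)(1 - s²)`, and `s² < 1` is
`4c² < (w + v)²`.
-/

open Matrix

theorem Matrix.posDef_fin_two_of_trace_pos_of_det_pos {M : Matrix (Fin 2) (Fin 2) ℝ}
    (hM : M.IsHermitian) (htr : 0 < M.trace) (hdet : 0 < M.det) : M.PosDef := by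
  refine .of_dotProduct_mulVec_pos hM fun x hx => ?_
  have hsymm : M 1 0 = M 0 1 := by simpa using congrFun₂ hM 0 1
  rw [trace_fin_two] at htr
  rw [det_fin_two, hsymm] at hdet
  have ha : 0 < M 0 0 := by nlinarith [sq_nonneg (M 0 1)]
  -- `M₀₀ · xᵀ M x` is this sum of squares
  have hQ : 0 < (M 0 0 * x 0 + M 0 1 * x 1) ^ 2
      + (M 0 0 * M 1 1 - M 0 1 * M 0 1) * x 1 ^ 2 := by
    by_cases hx1 : x 1 = 0
    · have hx0 : x 0 ≠ 0 := fun hx0 => hx (funext fun i => by fin_cases i <;> simp [hx0, hx1])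
      simp only [hx1, mul_zero, add_zero]
      positivity
    · positivity
  simp only [dotProduct, mulVec, Fin.sum_univ_two, star_trivial, hsymm]
  nlinarith

lemma posDef_of_sq_lt_one {s : ℝ} (hs : s ^ 2 < 1) :
    (!![1, s; s, 1] : Matrix (Fin 2) (Fin 2) ℝ).PosDef := by
  refine posDef_fin_two_of_trace_pos_of_det_pos ?_ ?_ ?_
  · exact IsHermitian.ext fun i j => by fin_cases i <;> fin_cases j <;> rfl
  · rw [trace_fin_two_of]; norm_num
  · rw [det_fin_two_of]; nlinarith

lemma isHermitian_mul_mul_of_add_mul_add_eq_zero {w v c s : ℝ} (hs : (w + v) * s + 2 * c = 0) :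
    (!![w, c; c, v] * !![1, s; s, 1] * !![1, 0; 0, -1] : Matrix (Fin 2) (Fin 2) ℝ).IsHermitian := by
  simp only [mul_fin_two]
  refine IsHermitian.ext fun i j => ?_
  fin_cases i <;> fin_cases j <;> simp
  · linear_combination hs
  · linear_combination -hs

lemma posDef_mul_mul {w v c s : ℝ} (hwv : w * v < c ^ 2) (hvw : v < w)
    (hs : (w + v) * s + 2 * c = 0) (hs2 : s ^ 2 < 1) :
    (!![w, c; c, v] * !![1, s; s, 1] * !![1, 0; 0, -1] : Matrix (Fin 2) (Fin 2) ℝ).PosDef := by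
  refine posDef_fin_two_of_trace_pos_of_det_pos
    (isHermitian_mul_mul_of_add_mul_add_eq_zero hs) ?_ ?_
  · simp only [mul_fin_two, trace_fin_two_of]; linarith
  · simp only [det_mul, det_fin_two_of]; nlinarith

theorem liapunov_matrices_pos_def_general (w v c : ℝ)
    (h1 : (w + v) ^ 2 > 4 * c ^ 2) (h2 : w * v < c ^ 2) (h3 : w > v) :
    Matrix.PosDef (!![1, -2*c/(w+v); -2*c/(w+v), 1] : Matrix (Fin 2) (Fin 2) ℝ) ∧
    Matrix.PosDef
      ((!![w, c; c, v] : Matrix (Fin 2) (Fin 2) ℝ)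
        * !![1, -2*c/(w+v); -2*c/(w+v), 1]
        * !![1, 0; 0, -1]) := by
  have hwv : w + v ≠ 0 := fun h => by nlinarith [sq_nonneg c]
  set s := -2 * c / (w + v)
  have hs : (w + v) * s + 2 * c = 0 := by simp only [s]; field_simp; ring
  have hs2 : s ^ 2 < 1 := by
    by_contra! h
    have hsq : ((w + v) * s) ^ 2 = 4 * c ^ 2 := by
      rw [show (w + v) * s = -2 * c by linarith]; ring
    nlinarith [mul_le_mul_of_nonneg_left h (sq_nonneg (w + v))]
  exact ⟨posDef_of_sq_lt_one hs2, posDef_mul_mul h2 h3 hs hs2⟩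

/-- With `c ≠ 0`, `(w+v)² > 4c²`, `wv < c²` and `w > v`, setting
`s = −2c/(w+v)`, the matrices `S = [[1,s],[s,1]]` and `U = A·S·B` are both
positive definite, where `A = [[w,c],[c,v]]` and `B = diag(1,−1)`. -/
theorem liapunov_matrices_pos_def (w v c : ℝ) (hc : c ≠ 0)
    (h1 : (w + v) ^ 2 > 4 * c ^ 2) (h2 : w * v < c ^ 2) (h3 : w > v) :
    Matrix.PosDef (!![1, -2*c/(w+v); -2*c/(w+v), 1] : Matrix (Fin 2) (Fin 2) ℝ) ∧
    Matrix.PosDef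
      ((!![w, c; c, v] : Matrix (Fin 2) (Fin 2) ℝ)
        * !![1, -2*c/(w+v); -2*c/(w+v), 1]
        * !![1, 0; 0, -1]) :=
  liapunov_matrices_pos_def_general w v c h1 h2 h3
end

section
/- Let w, v, c be real numbers with c ≠ 0 satisfying (w+v)² > 4c² and wv < c². Then w − 2c²/(w+v) > 0 if and only if w − v > 0. -/
/-- For reals `w, v, c` with `c ≠ 0`, `(w+v)² > 4c²` and `wv < c²`:
`w − 2c²/(w+v) > 0` if and only if `w − v > 0`. -/
theorem key_inequality_equivalence (w v c : ℝ) (hc : c ≠ 0)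
    (h1 : (w + v) ^ 2 > 4 * c ^ 2) (h2 : w * v < c ^ 2) :
    w - 2 * c ^ 2 / (w + v) > 0 ↔ w - v > 0 := by
  have hc2 : c ^ 2 > 0 := by positivity
  have hs : w + v ≠ 0 := by
    intro h
    rw [h] at h1
    nlinarith
  have key : w - 2 * c ^ 2 / (w + v) = (w * (w + v) - 2 * c ^ 2) / (w + v) := by
    field_simp
  rw [gt_iff_lt, key, div_pos_iff]
  constructor
  · rintro (⟨ha, hb⟩ | ⟨ha, hb⟩)
    · -- s > 0, w*s > 2c²
      by_contra hwv
      push_neg at hwv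
      have hw : 0 < w := by nlinarith
      nlinarith [mul_nonneg (by linarith : (0:ℝ) ≤ v - w) hw.le]
    · -- s < 0, w*s < 2c²
      by_contra hwv
      push_neg at hwv
      nlinarith [mul_nonneg (by linarith : (0:ℝ) ≤ v - w) (by linarith : (0:ℝ) ≤ -(w+v))]
  · intro h
    rcases lt_or_gt_of_ne hs with hneg | hpos
    · right
      constructor
      · by_contra hge
        push_neg at hge
        have hw : w < 0 := by nlinarith
        nlinarith [mul_pos (by linarith : (0:ℝ) < w - v) (by linarith : (0:ℝ) < -w)]
      · exact hneg
    · left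
      refine ⟨?_, hpos⟩
      nlinarith [mul_pos (by linarith : (0:ℝ) < 2*w - (w+v)) hpos]
end

section
/- For the Hamiltonian H = h₁ − h₂ + V(q₁,q₂) with hₐ = ½(pₐ² + qₐ²), the function G = h₁ + h₂ + (p₁q₂ + p₂q₁)² + W(q₁,q₂) satisfies {H,G} = 0 if and only if ∂₁W = (1 + 2q₂²)∂₁V + 2q₁q₂∂₂V and −∂₂W = (1 + 2q₁²)∂₂V + 2q₁q₂∂₁V. -/
/-- Canonical Poisson bracket of two functions on `ℝ⁴` with coordinates
`(q₁, q₂, p₁, p₂) = (x 0, x 1, x 2, x 3)`. -/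
noncomputable def poissonBracket (F G : (Fin 4 → ℝ) → ℝ) (x : Fin 4 → ℝ) : ℝ :=
  fderiv ℝ F x (Pi.single 0 1) * fderiv ℝ G x (Pi.single 2 1)
    + fderiv ℝ F x (Pi.single 1 1) * fderiv ℝ G x (Pi.single 3 1)
    - fderiv ℝ F x (Pi.single 2 1) * fderiv ℝ G x (Pi.single 0 1)
    - fderiv ℝ F x (Pi.single 3 1) * fderiv ℝ G x (Pi.single 1 1)

/-! The bracket `{H, G}` is linear in the momenta `p = (x 2, x 3)`: the quartic terms coming from
`(p₁q₂ + p₂q₁)²` cancel, and so do the quadratic terms of `h₁ ∓ h₂`, leaving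
`p₁ ((1 + 2q₂²)∂₁V + 2q₁q₂∂₂V − ∂₁W) + p₂ ((1 + 2q₁²)∂₂V + 2q₁q₂∂₁V + ∂₂W)`. -/

open ContinuousLinearMap

noncomputable def hamiltonian (V : ℝ × ℝ → ℝ) (x : Fin 4 → ℝ) : ℝ :=
  (x 2 ^ 2 + x 0 ^ 2) / 2 - (x 3 ^ 2 + x 1 ^ 2) / 2 + V (x 0, x 1)

noncomputable def firstIntegral (W : ℝ × ℝ → ℝ) (x : Fin 4 → ℝ) : ℝ :=
  (x 2 ^ 2 + x 0 ^ 2 + x 3 ^ 2 + x 1 ^ 2) / 2 + (x 2 * x 1 + x 3 * x 0) ^ 2 + W (x 0, x 1)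

section PartialDerivatives

variable {x : Fin 4 → ℝ}

theorem hasFDerivAt_comp_positions {f : ℝ × ℝ → ℝ} (hf : DifferentiableAt ℝ f (x 0, x 1)) :
    HasFDerivAt (fun x : Fin 4 → ℝ => f (x 0, x 1))
      ((fderiv ℝ f (x 0, x 1)).comp ((proj 0).prod (proj 1))) x :=
  hf.hasFDerivAt.comp x ((hasFDerivAt_apply 0 x).prodMk (hasFDerivAt_apply 1 x))

theorem fderiv_hamiltonian_single {V : ℝ × ℝ → ℝ} (hV : DifferentiableAt ℝ V (x 0, x 1))
    (i : Fin 4) :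
    fderiv ℝ (hamiltonian V) x (Pi.single i 1) =
      ![x 0 + fderiv ℝ V (x 0, x 1) (1, 0), -x 1 + fderiv ℝ V (x 0, x 1) (0, 1), x 2, -x 3] i := by
  have c (i : Fin 4) := hasFDerivAt_apply (𝕜 := ℝ) (F' := fun _ : Fin 4 => ℝ) i x
  have hH : HasFDerivAt (hamiltonian V) _ x :=
    ((((c 2).pow 2).fun_add ((c 0).pow 2)).mul_const 2⁻¹).fun_sub
      ((((c 3).pow 2).fun_add ((c 1).pow 2)).mul_const 2⁻¹) |>.fun_add
      (hasFDerivAt_comp_positions hV)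
  rw [hH.fderiv]
  fin_cases i <;> simp [Prod.mk_zero_zero]

theorem fderiv_firstIntegral_single {W : ℝ × ℝ → ℝ} (hW : DifferentiableAt ℝ W (x 0, x 1))
    (i : Fin 4) :
    fderiv ℝ (firstIntegral W) x (Pi.single i 1) =
      ![x 0 + 2 * (x 2 * x 1 + x 3 * x 0) * x 3 + fderiv ℝ W (x 0, x 1) (1, 0),
        x 1 + 2 * (x 2 * x 1 + x 3 * x 0) * x 2 + fderiv ℝ W (x 0, x 1) (0, 1),
        x 2 + 2 * (x 2 * x 1 + x 3 * x 0) * x 1, x 3 + 2 * (x 2 * x 1 + x 3 * x 0) * x 0] i := by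
  have c (i : Fin 4) := hasFDerivAt_apply (𝕜 := ℝ) (F' := fun _ : Fin 4 => ℝ) i x
  have hS := ((c 2).fun_mul (c 1)).fun_add ((c 3).fun_mul (c 0))
  have hG : HasFDerivAt (firstIntegral W) _ x :=
    (((((c 2).pow 2).fun_add ((c 0).pow 2)).fun_add ((c 3).pow 2)).fun_add ((c 1).pow 2)
      |>.mul_const 2⁻¹).fun_add (hS.pow 2) |>.fun_add (hasFDerivAt_comp_positions hW)
  rw [hG.fderiv]
  -- without the exclusions `simp` cancels common factors into disjunctions that `ring` cannot close
  fin_cases i <;> simp [Prod.mk_zero_zero, -mul_eq_mul_left_iff, -mul_eq_mul_right_iff] <;> ring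

end PartialDerivatives

theorem poissonBracket_hamiltonian_firstIntegral {V W : ℝ × ℝ → ℝ} {x : Fin 4 → ℝ}
    (hV : DifferentiableAt ℝ V (x 0, x 1)) (hW : DifferentiableAt ℝ W (x 0, x 1)) :
    poissonBracket (hamiltonian V) (firstIntegral W) x =
      x 2 * ((1 + 2 * x 1 ^ 2) * fderiv ℝ V (x 0, x 1) (1, 0)
          + 2 * x 0 * x 1 * fderiv ℝ V (x 0, x 1) (0, 1) - fderiv ℝ W (x 0, x 1) (1, 0))
        + x 3 * ((1 + 2 * x 0 ^ 2) * fderiv ℝ V (x 0, x 1) (0, 1)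
          + 2 * x 0 * x 1 * fderiv ℝ V (x 0, x 1) (1, 0) + fderiv ℝ W (x 0, x 1) (0, 1)) := by
  simp only [poissonBracket, fderiv_hamiltonian_single hV, fderiv_firstIntegral_single hW]
  simp only [Fin.isValue, Matrix.cons_val_zero, Matrix.cons_val_one, Matrix.cons_val]
  ring

theorem forall_momentum_linear_eq_zero_iff (A B : ℝ × ℝ → ℝ) :
    (∀ x : Fin 4 → ℝ, x 2 * A (x 0, x 1) + x 3 * B (x 0, x 1) = 0) ↔ ∀ q, A q = 0 ∧ B q = 0 := by
  refine ⟨fun h q => ⟨?_, ?_⟩, fun h x => by simp [h]⟩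
  · simpa using h ![q.1, q.2, 1, 0]
  · simpa using h ![q.1, q.2, 0, 1]

/-- For `H = h₁ − h₂ + V(q)` and `G = h₁ + h₂ + (p₁q₂ + p₂q₁)² + W(q)`,
`{H,G} = 0` identically iff `W` satisfies
`∂₁W = (1 + 2q₂²)∂₁V + 2q₁q₂∂₂V` and `−∂₂W = (1 + 2q₁²)∂₂V + 2q₁q₂∂₁V`. -/
theorem first_integral_condition_iff_pde (V W : ℝ × ℝ → ℝ)
    (hV : ContDiff ℝ 1 V) (hW : ContDiff ℝ 1 W) :
    (∀ x : Fin 4 → ℝ,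
      poissonBracket
        (fun x => (x 2 ^ 2 + x 0 ^ 2) / 2 - (x 3 ^ 2 + x 1 ^ 2) / 2 + V (x 0, x 1))
        (fun x => (x 2 ^ 2 + x 0 ^ 2 + x 3 ^ 2 + x 1 ^ 2) / 2
          + (x 2 * x 1 + x 3 * x 0) ^ 2 + W (x 0, x 1)) x = 0) ↔
    (∀ q : ℝ × ℝ,
      fderiv ℝ W q (1, 0)
          = (1 + 2 * q.2 ^ 2) * fderiv ℝ V q (1, 0) + 2 * q.1 * q.2 * fderiv ℝ V q (0, 1) ∧
      -fderiv ℝ W q (0, 1)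
          = (1 + 2 * q.1 ^ 2) * fderiv ℝ V q (0, 1) + 2 * q.1 * q.2 * fderiv ℝ V q (1, 0)) := by
  change (∀ x, poissonBracket (hamiltonian V) (firstIntegral W) x = 0) ↔ _
  simp only [poissonBracket_hamiltonian_firstIntegral (hV.differentiable one_ne_zero _)
    (hW.differentiable one_ne_zero _)]
  refine (forall_momentum_linear_eq_zero_iff
    (fun q => (1 + 2 * q.2 ^ 2) * fderiv ℝ V q (1, 0) + 2 * q.1 * q.2 * fderiv ℝ V q (0, 1)
      - fderiv ℝ W q (1, 0))
    (fun q => (1 + 2 * q.1 ^ 2) * fderiv ℝ V q (0, 1) + 2 * q.1 * q.2 * fderiv ℝ V q (1, 0)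
      + fderiv ℝ W q (0, 1))).trans (forall_congr' fun q => and_congr ?_ ?_)
  · rw [sub_eq_zero, eq_comm]
  · rw [add_eq_zero_iff_eq_neg', neg_eq_iff_eq_neg, eq_comm]
end

section
/- With V(q) = C[2(q₁² − q₂²) + a] and W(q) = C[1 + 2(q₁² + q₂²)], the function G = ½(p₁² + q₁² + p₂² + q₂²) + (p₁q₂ + p₂q₁)² + W(q) is a first integral of the Hamiltonian H = ½(p₁² + q₁²) − ½(p₂² + q₂²) + V(q), i.e. {H, G} = 0. -/
open ContinuousLinearMap

theorem hasFDerivAt_apply_sq {ι : Type*} [Fintype ι] (i : ι) (x : ι → ℝ) :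
    HasFDerivAt (fun x : ι → ℝ => x i ^ 2)
      ((2 * x i) • proj i : (ι → ℝ) →L[ℝ] ℝ) x := by
  refine ((hasDerivAt_pow 2 (x i)).comp_hasFDerivAt x
    (proj (R := ℝ) (φ := fun _ : ι => ℝ) i).hasFDerivAt).congr_fderiv ?_
  norm_num

noncomputable def caseIIHamiltonian (C a : ℝ) (x : Fin 4 → ℝ) : ℝ :=
  (x 2 ^ 2 + x 0 ^ 2) / 2 - (x 3 ^ 2 + x 1 ^ 2) / 2 + C * (2 * (x 0 ^ 2 - x 1 ^ 2) + a)

noncomputable def caseIIIntegral (C : ℝ) (x : Fin 4 → ℝ) : ℝ :=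
  (x 2 ^ 2 + x 0 ^ 2 + x 3 ^ 2 + x 1 ^ 2) / 2 + (x 2 * x 1 + x 3 * x 0) ^ 2
    + C * (1 + 2 * (x 0 ^ 2 + x 1 ^ 2))

theorem hasFDerivAt_caseIIHamiltonian (C a : ℝ) (x : Fin 4 → ℝ) :
    HasFDerivAt (caseIIHamiltonian C a)
      (((1 + 4 * C) * x 0) • proj 0 - ((1 + 4 * C) * x 1) • proj 1
        + x 2 • proj 2 - x 3 • proj 3 :
        (Fin 4 → ℝ) →L[ℝ] ℝ) x := by
  have hsq := fun i => hasFDerivAt_apply_sq i x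
  refine (((((hsq 2).add (hsq 0)).mul_const (2⁻¹ : ℝ)).sub
      (((hsq 3).add (hsq 1)).mul_const (2⁻¹ : ℝ))).add
    ((((hsq 0).sub (hsq 1)).const_mul 2 |>.add_const a).const_mul C) :
      HasFDerivAt (caseIIHamiltonian C a) _ x).congr_fderiv ?_
  ext v
  simp
  ring

theorem hasFDerivAt_caseIIIntegral (C : ℝ) (x : Fin 4 → ℝ) :
    let s := x 2 * x 1 + x 3 * x 0
    HasFDerivAt (caseIIIntegral C)
      (((1 + 4 * C) * x 0 + 2 * s * x 3) • proj 0 + ((1 + 4 * C) * x 1 + 2 * s * x 2) • proj 1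
        + (x 2 + 2 * s * x 1) • proj 2 + (x 3 + 2 * s * x 0) • proj 3 :
        (Fin 4 → ℝ) →L[ℝ] ℝ) x := by
  have hproj := fun i => (proj (R := ℝ) (φ := fun _ : Fin 4 => ℝ) i).hasFDerivAt (x := x)
  have hsq := fun i => hasFDerivAt_apply_sq i x
  have hs := (hasDerivAt_pow 2 _).comp_hasFDerivAt x
    (((hproj 2).mul (hproj 1)).add ((hproj 3).mul (hproj 0)))
  refine (((((((hsq 2).add (hsq 0)).add (hsq 3)).add (hsq 1)).mul_const (2⁻¹ : ℝ)).add hs).add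
    ((((hsq 0).add (hsq 1)).const_mul 2 |>.const_add 1).const_mul C) :
      HasFDerivAt (caseIIIntegral C) _ x).congr_fderiv ?_
  ext v
  simp
  ring

/-- Case II of the internally interacting double oscillator: with
`V = C[2(q₁²−q₂²)+a]` and `W = C[1+2(q₁²+q₂²)]`, the function
`G = ½(p₁²+q₁²+p₂²+q₂²) + (p₁q₂+p₂q₁)² + W` is a first integral of
`H = ½(p₁²+q₁²) − ½(p₂²+q₂²) + V`. -/
theorem case_II_first_integral (C a : ℝ) :
    ∀ x : Fin 4 → ℝ,
      poissonBracket
        (fun x => (x 2 ^ 2 + x 0 ^ 2) / 2 - (x 3 ^ 2 + x 1 ^ 2) / 2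
          + C * (2 * (x 0 ^ 2 - x 1 ^ 2) + a))
        (fun x => (x 2 ^ 2 + x 0 ^ 2 + x 3 ^ 2 + x 1 ^ 2) / 2
          + (x 2 * x 1 + x 3 * x 0) ^ 2
          + C * (1 + 2 * (x 0 ^ 2 + x 1 ^ 2))) x = 0 := by
  intro x
  change poissonBracket (caseIIHamiltonian C a) (caseIIIntegral C) x = 0
  rw [poissonBracket, (hasFDerivAt_caseIIHamiltonian C a x).fderiv,
    (hasFDerivAt_caseIIIntegral C x).fderiv]
  simp
  ring
end

section
/- For C > −1/4, the function G = ½(p₁² + q₁² + p₂² + q₂²) + (p₁q₂ + p₂q₁)² + C(1 + 2q₁² + 2q₂²) has a strict local minimum at the origin (q₁,q₂,p₁,p₂) = (0,0,0,0). -/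
/-- For `C > −1/4` the Lyapunov function
`G = ½(p₁²+q₁²+p₂²+q₂²) + (p₁q₂+p₂q₁)² + C(1+2q₁²+2q₂²)` has a strict local
minimum at the origin of `ℝ⁴` (coordinates `(q₁,q₂,p₁,p₂) = (x 0, x 1, x 2, x 3)`). -/
theorem case_II_strict_local_minimum (C : ℝ) (hC : C > -(1/4)) :
    ∃ U ∈ nhds (0 : Fin 4 → ℝ), ∀ x ∈ U, x ≠ 0 →
      ((0:ℝ) ^ 2 + 0 ^ 2 + 0 ^ 2 + 0 ^ 2) / 2 + (0 * 0 + 0 * 0) ^ 2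
          + C * (1 + 2 * ((0:ℝ) ^ 2 + 0 ^ 2))
        < (x 2 ^ 2 + x 0 ^ 2 + x 3 ^ 2 + x 1 ^ 2) / 2
          + (x 2 * x 1 + x 3 * x 0) ^ 2 + C * (1 + 2 * (x 0 ^ 2 + x 1 ^ 2)) := by
  refine ⟨Set.univ, Filter.univ_mem, fun x _ hx => ?_⟩
  have h4 : x 0 ≠ 0 ∨ x 1 ≠ 0 ∨ x 2 ≠ 0 ∨ x 3 ≠ 0 := by
    by_contra h
    push_neg at h
    obtain ⟨h0, h1, h2, h3⟩ := h
    exact hx (funext fun i => by fin_cases i <;> assumption)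
  rcases h4 with h | h | h | h <;>
    nlinarith [mul_self_pos.mpr h, sq_nonneg (x 0), sq_nonneg (x 1), sq_nonneg (x 2),
      sq_nonneg (x 3), sq_nonneg (x 2 * x 1 + x 3 * x 0)]
end
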